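/- arXiv:2112.00205 — 8 statements merged into one kernel-verified Lean document; each statement's English description precedes it below -/
import Mathlib

section
/- Let B be a bicategory satisfying axioms (1-Flt) and (2-Flt). Then for any pair of parallel 1-cells f, g : A → B there exist an object C, a 1-cell u : B → C and an invertible 2-cell γ : u ∘ f ≅ u ∘ g. -/
open CategoryTheory Bicategory

universe w v u

namespace Paper

/-- Axiom (1-Flt): for any parallel 1-cells `f, g : A ⟶ B` there exist an object `C`,
a 1-cell `u : B ⟶ C` and a 2-cell `γ : u ∘ f ⟹ u ∘ g`. -/
def Flt1 (B : Type u) [Bicategory.{w, v} B] : Prop :=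
  ∀ ⦃A B' : B⦄ (f g : A ⟶ B'), ∃ (C : B) (u : B' ⟶ C) (_ : f ≫ u ⟶ g ≫ u), True

/-- Axiom (2-Flt): for any parallel 2-cells `α, β : f ⟹ g : A ⟶ B` there exist an object `C`
and a 1-cell `u : B ⟶ C` with equal whiskerings `u ◁ α = u ◁ β`. -/
def Flt2 (B : Type u) [Bicategory.{w, v} B] : Prop :=
  ∀ ⦃A B' : B⦄ (f g : A ⟶ B') (α β : f ⟶ g), ∃ (C : B) (u : B' ⟶ C), α ▷ u = β ▷ u

/-- Assuming (1-Flt) and (2-Flt), the 2-cell in axiom (1-Flt) can be taken to be invertible. -/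
theorem flt1_invertible (B : Type u) [Bicategory.{w, v} B]
    (h1 : Flt1 B) (h2 : Flt2 B) :
    ∀ ⦃A B' : B⦄ (f g : A ⟶ B'), ∃ (C : B) (u : B' ⟶ C), Nonempty (f ≫ u ≅ g ≫ u) := by
  intro A B' f g
  obtain ⟨C₁, u, γ, -⟩ := h1 f g
  obtain ⟨C₂, v, δ, -⟩ := h1 (g ≫ u) (f ≫ u)
  obtain ⟨C₃, w, hw⟩ := h2 _ _ (γ ▷ v ≫ δ) (𝟙 _)
  obtain ⟨C₄, x, hx⟩ := h2 _ _ (δ ▷ w ≫ (γ ▷ v) ▷ w) (𝟙 _)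
  have e1 : ((γ ▷ v) ▷ w) ▷ x ≫ (δ ▷ w) ▷ x = 𝟙 _ := by
    rw [← comp_whiskerRight, ← comp_whiskerRight, hw]
    simp
  have e2 : (δ ▷ w) ▷ x ≫ ((γ ▷ v) ▷ w) ▷ x = 𝟙 _ := by
    rw [← comp_whiskerRight, hx]
    simp
  refine ⟨C₄, u ≫ v ≫ w ≫ x, ⟨?_⟩⟩
  have core : (((f ≫ u) ≫ v) ≫ w) ≫ x ≅ (((g ≫ u) ≫ v) ≫ w) ≫ x :=
    ⟨((γ ▷ v) ▷ w) ▷ x, (δ ▷ w) ▷ x, e1, e2⟩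
  exact ((α_ f u (v ≫ w ≫ x)).symm ≪≫ (α_ (f ≫ u) v (w ≫ x)).symm ≪≫
      (α_ ((f ≫ u) ≫ v) w x).symm) ≪≫ core ≪≫
      ((α_ g u (v ≫ w ≫ x)).symm ≪≫ (α_ (g ≫ u) v (w ≫ x)).symm ≪≫
      (α_ ((g ≫ u) ≫ v) w x).symm).symm

end Paper
end

section
/- A non-empty bicategory is filtered if and only if it is pseudofiltered and connected. -/
/-!
A finite bicategory is the disjoint union of its connected components, the fibres of
`component`, and each of them is a finite connected full sub-bicategory, so a pseudofiltered `B`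
has a pseudo-cocone over the restriction of a diagram to each component. Pseudo-cocones over
spans and connectedness of `B` give every finite family of objects a common upper bound; whiskering
moves all these pseudo-cocones to one apex, and since no 1-cell joins two components they glue to
a pseudo-cocone over the whole diagram. Conversely, a pseudo-cocone over the discrete diagram on
`x` and `y` is a zigzag `x ⟶ E ⟵ y`.
-/

open CategoryTheory Bicategory

universe w v u w' v' u'

namespace Paper

/-- A pseudo-cocone of a pseudofunctor `F : C ⥤ B` with apex `E : B`. -/
structure PseudoCocone {C : Type u'} [Bicategory.{w', v'} C] {B : Type u} [Bicategory.{w, v} B]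
    (F : Pseudofunctor C B) (E : B) where
  app (A : C) : F.obj A ⟶ E
  nat {A A' : C} (f : A ⟶ A') : F.map f ≫ app A' ≅ app A
  unity (A : C) :
    (nat (𝟙 A)).hom = ((F.mapId A).hom ▷ app A) ≫ (λ_ (app A)).hom
  comp {A A' A'' : C} (f : A ⟶ A') (g : A' ⟶ A'') :
    (nat (f ≫ g)).hom =
      ((F.mapComp f g).hom ▷ app A'') ≫ (α_ (F.map f) (F.map g) (app A'')).hom ≫
        (F.map f ◁ (nat g).hom) ≫ (nat f).hom
  nat2 {A A' : C} {f g : A ⟶ A'} (γ : f ⟶ g) :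
    (F.map₂ γ ▷ app A') ≫ (nat g).hom = (nat f).hom

/-- A bicategory is finite if it has finitely many objects, 1-cells and 2-cells. -/
def FiniteBicategory (C : Type u') [Bicategory.{w', v'} C] : Prop :=
  Finite C ∧ (∀ a b : C, Finite (a ⟶ b)) ∧ ∀ (a b : C) (f g : a ⟶ b), Finite (f ⟶ g)

/-- A bicategory is connected if any two of its objects can be joined by a finite zigzag of
1-cells. -/
def ConnectedBicategory (C : Type u') [Bicategory.{w', v'} C] : Prop :=
  ∀ a b : C, Relation.ReflTransGen (fun x y : C => Nonempty (x ⟶ y) ∨ Nonempty (y ⟶ x)) a b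

/-- A (non-empty) bicategory is filtered if every pseudofunctor from a finite bicategory
admits a pseudo-cocone. -/
def IsFiltered (B : Type u) [Bicategory.{w, v} B] : Prop :=
  ∀ (C : Type u') [Bicategory.{w', v'} C], FiniteBicategory C →
    ∀ F : Pseudofunctor C B, ∃ E : B, Nonempty (PseudoCocone F E)

/-- A (non-empty) bicategory is pseudofiltered if every pseudofunctor from a finite connected
bicategory admits a pseudo-cocone. -/
def IsPseudofiltered (B : Type u) [Bicategory.{w, v} B] : Prop :=
  ∀ (C : Type u') [Bicategory.{w', v'} C], FiniteBicategory C → ConnectedBicategory C →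
    ∀ F : Pseudofunctor C B, ∃ E : B, Nonempty (PseudoCocone F E)

/- The shapes are built by hand rather than with `LocallyDiscrete`, whose 2-cells live in the
universe of its 1-cells: `IsFiltered` quantifies over shapes whose objects, 1-cells and 2-cells
live in three independent universes. -/
structure Thin {α : Type u'} (r : α → α → Prop) : Type u' where
  of ::
  base : α

namespace Thin

variable {α : Type u'} {r : α → α → Prop}

structure Hom (a b : Thin r) : Type v' where
  le : r a.base b.base

instance (a b : Thin r) : Subsingleton (Hom.{v'} a b) := ⟨fun ⟨_⟩ ⟨_⟩ => rfl⟩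

instance (a b : Thin r) : Category.{w'} (Hom.{v'} a b) where
  Hom _ _ := PUnit
  id _ := ⟨⟩
  comp _ _ := ⟨⟩

variable [IsPreorder α r]

instance : Bicategory.{w', v'} (Thin r) where
  Hom := Hom
  id a := ⟨refl_of r a.base⟩
  comp f g := ⟨_root_.trans_of r f.le g.le⟩
  whiskerLeft _ _ _ _ := PUnit.unit
  whiskerRight _ _ := PUnit.unit
  associator _ _ _ := ⟨PUnit.unit, PUnit.unit, rfl, rfl⟩
  leftUnitor _ := ⟨PUnit.unit, PUnit.unit, rfl, rfl⟩
  rightUnitor _ := ⟨PUnit.unit, PUnit.unit, rfl, rfl⟩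

theorem rel_of_hom {a b : Thin r} (f : a ⟶ b) : r a.base b.base := Hom.le f

instance (a b : Thin r) : Subsingleton (a ⟶ b) := inferInstanceAs (Subsingleton (Hom a b))

variable (r) in
theorem finiteBicategory [Finite α] : FiniteBicategory.{w', v'} (Thin r) :=
  ⟨.of_injective base fun ⟨_⟩ ⟨_⟩ h => congrArg of h,
    fun a b => Finite.of_subsingleton (α := Hom.{v'} a b),
    fun _ _ _ _ => inferInstanceAs (Finite PUnit)⟩

end Thin

inductive SpanShape : Type u'
  | zero | left | right

namespace SpanShape

def Arrow : SpanShape.{u'} → SpanShape.{u'} → Prop := fun a b => a = zero ∨ a = b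

instance : IsPreorder SpanShape.{u'} Arrow where
  refl _ := Or.inr rfl
  trans _ _ _ := by
    rintro (rfl | rfl) h
    exacts [Or.inl rfl, h]

instance : Finite SpanShape.{u'} :=
  .of_surjective (fun o : Option Bool => o.elim zero fun b => cond b left right) <| by
    rintro (_ | _ | _)
    exacts [⟨none, rfl⟩, ⟨some true, rfl⟩, ⟨some false, rfl⟩]

end SpanShape

section Shapes

variable {B : Type u} [Bicategory.{w, v} B]

def discretePseudofunctor {α : Type u'} (X : α → B) : Pseudofunctor (Thin (@Eq α)) B where
  obj a := X a.base
  map f := eqToHom (congrArg X (Thin.rel_of_hom f))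
  map₂ _ := 𝟙 _
  mapId _ := Iso.refl _
  mapComp _ _ := eqToHomTransIso _ _
  map₂_whisker_left f g h _ := by
    obtain rfl : g = h := Subsingleton.elim _ _
    simp
  map₂_whisker_right {_ _ _ f g} _ h := by
    obtain rfl : f = g := Subsingleton.elim _ _
    simp
  map₂_associator := by
    rintro ⟨a⟩ ⟨b⟩ ⟨c⟩ ⟨d⟩ ⟨⟨rfl⟩⟩ ⟨⟨rfl⟩⟩ ⟨⟨rfl⟩⟩
    simp
  map₂_left_unitor := by
    rintro ⟨a⟩ ⟨b⟩ ⟨⟨rfl⟩⟩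
    simp
  map₂_right_unitor := by
    rintro ⟨a⟩ ⟨b⟩ ⟨⟨rfl⟩⟩
    simp

section Span

open SpanShape

variable {x y z : B} (f : x ⟶ y) (g : x ⟶ z)

-- Reducible, so that `simp` sees the hom-categories at `spanObj x y z zero` and at `x` as the
-- same instance.
variable (x y z) in
abbrev spanObj : SpanShape.{u'} → B
  | zero => x
  | left => y
  | right => z

def spanMap : ∀ {a b : SpanShape.{u'}}, a.Arrow b → (spanObj x y z a ⟶ spanObj x y z b)
  | zero, zero, _ => 𝟙 x
  | zero, left, _ => f
  | zero, right, _ => g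
  | left, left, _ => 𝟙 y
  | right, right, _ => 𝟙 z
  | left, zero, h | left, right, h | right, zero, h | right, left, h =>
    absurd h (by simp [SpanShape.Arrow])

def spanMapId :
    ∀ a : SpanShape.{u'}, spanMap f g (refl_of SpanShape.Arrow a) ≅ 𝟙 (spanObj x y z a)
  | zero | left | right => Iso.refl _

def spanMapComp : ∀ {a b c : SpanShape.{u'}} (h₁ : a.Arrow b) (h₂ : b.Arrow c),
    spanMap f g (trans_of SpanShape.Arrow h₁ h₂) ≅ spanMap f g h₁ ≫ spanMap f g h₂
  | zero, zero, zero, _, _ => (λ_ (𝟙 x)).symm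
  | zero, zero, left, _, _ => (λ_ f).symm
  | zero, zero, right, _, _ => (λ_ g).symm
  | zero, left, left, _, _ => (ρ_ f).symm
  | zero, right, right, _, _ => (ρ_ g).symm
  | left, left, left, _, _ => (λ_ (𝟙 y)).symm
  | right, right, right, _, _ => (λ_ (𝟙 z)).symm
  | left, zero, _, h, _ | left, right, _, h, _ | right, zero, _, h, _ | right, left, _, h, _
  | _, left, zero, _, h | _, left, right, _, h | _, right, zero, _, h | _, right, left, _, h =>
    absurd h (by simp [SpanShape.Arrow])

def spanPseudofunctor : Pseudofunctor (Thin (@SpanShape.Arrow.{u'})) B where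
  obj a := spanObj x y z a.base
  map h := spanMap f g (Thin.rel_of_hom h)
  map₂ _ := 𝟙 _
  mapId a := spanMapId f g a.base
  mapComp h₁ h₂ := spanMapComp f g (Thin.rel_of_hom h₁) (Thin.rel_of_hom h₂)
  map₂_whisker_left f g h _ := by
    obtain rfl : g = h := Subsingleton.elim _ _
    simp
  map₂_whisker_right {_ _ _ f g} _ h := by
    obtain rfl : f = g := Subsingleton.elim _ _
    simp
  map₂_associator := by
    rintro ⟨a⟩ ⟨b⟩ ⟨c⟩ ⟨d⟩ ⟨hab⟩ ⟨hbc⟩ ⟨hcd⟩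
    cases a <;> cases b <;> cases c <;> cases d <;> simp [SpanShape.Arrow] at hab hbc hcd <;>
      simp [spanMap, spanMapComp]
  map₂_left_unitor := by
    rintro ⟨a⟩ ⟨b⟩ ⟨hab⟩
    cases a <;> cases b <;> simp [SpanShape.Arrow] at hab <;>
      simp [spanMap, spanMapId, spanMapComp]
  map₂_right_unitor := by
    rintro ⟨a⟩ ⟨b⟩ ⟨hab⟩
    cases a <;> cases b <;> simp [SpanShape.Arrow] at hab <;>
      simp [spanMap, spanMapId, spanMapComp]

end Span

end Shapes

section UpperBounds

variable {B : Type u} [Bicategory.{w, v} B]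

theorem connectedBicategory_thin_spanShape :
    ConnectedBicategory.{w', v'} (Thin (@SpanShape.Arrow.{u'})) := fun _ _ =>
  .head (.inr ⟨⟨Or.inl rfl⟩⟩) (.single (.inl ⟨⟨Or.inl rfl⟩⟩))

theorem IsPseudofiltered.cocone_span (hB : IsPseudofiltered.{w, v, u, w', v', u'} B) {x y z : B}
    (f : x ⟶ y) (g : x ⟶ z) : ∃ S : B, Nonempty (y ⟶ S) ∧ Nonempty (z ⟶ S) := by
  obtain ⟨S, ⟨θ⟩⟩ := hB _ (Thin.finiteBicategory _) connectedBicategory_thin_spanShape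
    (spanPseudofunctor f g)
  exact ⟨S, ⟨θ.app ⟨.left⟩⟩, ⟨θ.app ⟨.right⟩⟩⟩

theorem IsPseudofiltered.cocone_objs (hB : IsPseudofiltered.{w, v, u, w', v', u'} B)
    (hconn : ConnectedBicategory B) (x y : B) :
    ∃ S : B, Nonempty (x ⟶ S) ∧ Nonempty (y ⟶ S) := by
  induction hconn x y with
  | refl => exact ⟨x, ⟨𝟙 x⟩, ⟨𝟙 x⟩⟩
  | tail _ step ih =>
    obtain ⟨S, ⟨u⟩, ⟨v⟩⟩ := ih
    rcases step with ⟨⟨e⟩⟩ | ⟨⟨e⟩⟩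
    · obtain ⟨T, ⟨p⟩, ⟨q⟩⟩ := hB.cocone_span v e
      exact ⟨T, ⟨u ≫ p⟩, ⟨q⟩⟩
    · exact ⟨S, ⟨u⟩, ⟨e ≫ v⟩⟩

theorem IsPseudofiltered.sup_objs_exists [Nonempty B]
    (hB : IsPseudofiltered.{w, v, u, w', v', u'} B) (hconn : ConnectedBicategory B)
    {ι : Type*} [Finite ι] (x : ι → B) : ∃ S : B, ∀ i, Nonempty (x i ⟶ S) := by
  have := Fintype.ofFinite ι
  suffices ∀ s : Finset ι, ∃ S : B, ∀ i ∈ s, Nonempty (x i ⟶ S) by simpa using this .univ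
  intro s
  induction s using Finset.cons_induction with
  | empty => exact ⟨Classical.arbitrary B, by simp⟩
  | cons j s _ ih =>
    obtain ⟨S, hS⟩ := ih
    obtain ⟨T, ⟨p⟩, ⟨q⟩⟩ := hB.cocone_objs hconn (x j) S
    exact ⟨T, by simpa using ⟨⟨p⟩, fun i hi => (hS i hi).map (· ≫ q)⟩⟩

end UpperBounds

section FullSubbicategory

variable {C : Type u'} [Bicategory.{w', v'} C] {B : Type u} [Bicategory.{w, v} B]

abbrev FullSubbicategory (P : C → Prop) := InducedBicategory C (Subtype.val : {a // P a} → C)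

def restrict (F : Pseudofunctor C B) (P : C → Prop) : Pseudofunctor (FullSubbicategory P) B where
  obj a := F.obj a.1
  map f := F.map f.hom
  map₂ η := F.map₂ η.hom
  mapId a := F.mapId a.1
  mapComp f g := F.mapComp f.hom g.hom
  map₂_id f := F.map₂_id f.hom
  map₂_comp η θ := F.map₂_comp η.hom θ.hom
  map₂_whisker_left f _ _ η := F.map₂_whisker_left f.hom η.hom
  map₂_whisker_right η h := F.map₂_whisker_right η.hom h.hom
  map₂_associator f g h := F.map₂_associator f.hom g.hom h.hom
  map₂_left_unitor f := F.map₂_left_unitor f.hom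
  map₂_right_unitor f := F.map₂_right_unitor f.hom

theorem FiniteBicategory.fullSubbicategory (hC : FiniteBicategory.{w', v', u'} C)
    (P : C → Prop) : FiniteBicategory.{w', v', u'} (FullSubbicategory P) := by
  obtain ⟨hobj, hhom, hhom₂⟩ := hC
  exact ⟨Subtype.finite, fun a b => .of_injective _ fun _ _ => InducedBicategory.hom_ext,
    fun a b f g => .of_injective _ fun _ _ => InducedBicategory.hom₂_ext⟩

def component (a : C) : Set C :=
  {b | Relation.ReflTransGen (fun x y : C => Nonempty (x ⟶ y) ∨ Nonempty (y ⟶ x)) a b}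

theorem component_eq_of_mem {a b : C} (h : b ∈ component a) : component b = component a := by
  have hba : a ∈ component b := by
    induction h with
    | refl => exact .refl
    | tail _ step ih => exact .head step.symm ih
  ext c
  exact ⟨h.trans, hba.trans⟩

theorem component_eq_of_hom {a b : C} (f : a ⟶ b) : component a = component b :=
  (component_eq_of_mem (.single (.inl ⟨f⟩))).symm

theorem connectedBicategory_component_fiber (i : Set C) :
    ConnectedBicategory.{w', v'} (FullSubbicategory fun a : C => component a = i) := by
  rintro ⟨a, rfl⟩ ⟨b, hb⟩
  have hab : b ∈ component a := hb ▸ .refl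
  induction hab with
  | refl => exact .refl
  | @tail c d hac step ih =>
    exact (ih (component_eq_of_mem hac)).tail
      (step.imp (·.map InducedBicategory.mkHom) (·.map InducedBicategory.mkHom))

end FullSubbicategory

namespace PseudoCocone

variable {C : Type u'} [Bicategory.{w', v'} C] {B : Type u} [Bicategory.{w, v} B]
  {F : Pseudofunctor C B} {E : B}

def copy (θ : PseudoCocone F E) (app : ∀ a, F.obj a ⟶ E) (h : ∀ a, app a = θ.app a) :
    PseudoCocone F E where
  app := app
  nat f := whiskerLeftIso _ (eqToIso (h _)) ≪≫ θ.nat f ≪≫ eqToIso (h _).symm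
  unity a := by
    obtain rfl : app = θ.app := funext h
    simpa using θ.unity a
  comp f g := by
    obtain rfl : app = θ.app := funext h
    simpa using θ.comp f g
  nat2 γ := by
    obtain rfl : app = θ.app := funext h
    simpa using θ.nat2 γ

def whisker (θ : PseudoCocone F E) {E' : B} (e : E ⟶ E') : PseudoCocone F E' where
  app a := θ.app a ≫ e
  nat f := (α_ _ _ _).symm ≪≫ whiskerRightIso (θ.nat f) e
  unity a := by simp [θ.unity a, comp_whiskerRight]
  comp f g := by simp [θ.comp f g, comp_whiskerRight]
  nat2 γ := by simp [← θ.nat2 γ, comp_whiskerRight]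

section Glue

open InducedBicategory

variable {κ : Type*} (k : C → κ) (θ : ∀ i, PseudoCocone (restrict F fun a => k a = i) E)

def glueApp (a : C) : F.obj a ⟶ E := (θ (k a)).app ⟨a, rfl⟩

/- `θ i` with its 1-cells replaced by the glued ones, so that the glued pseudo-cocone can take its
2-cells from these without any transport. -/
def onFiber (i : κ) : PseudoCocone (restrict F fun a => k a = i) E :=
  (θ i).copy (fun a => glueApp k θ a.1) fun ⟨_, h⟩ => by subst h; rfl

theorem onFiber_nat_hom_congr {i j : κ} {a a' : C} (f : a ⟶ a') (hi : k a = i) (hi' : k a' = i)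
    (hj : k a = j) (hj' : k a' = j) :
    ((onFiber k θ i).nat (A := ⟨a, hi⟩) (A' := ⟨a', hi'⟩) (mkHom f)).hom =
      ((onFiber k θ j).nat (A := ⟨a, hj⟩) (A' := ⟨a', hj'⟩) (mkHom f)).hom := by
  subst hi hj
  rfl

def glue (hk : ∀ {a b : C}, (a ⟶ b) → k a = k b) : PseudoCocone F E where
  app := glueApp k θ
  nat {a a'} f :=
    (onFiber k θ (k a)).nat (A := ⟨a, rfl⟩) (A' := ⟨a', (hk f).symm⟩) (mkHom f)
  unity a := (onFiber k θ (k a)).unity ⟨a, rfl⟩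
  comp {a a' a''} f g := by
    rw [onFiber_nat_hom_congr k θ g rfl (hk g).symm (hk f).symm ((hk f).trans (hk g)).symm]
    exact (onFiber k θ (k a)).comp (A := ⟨a, rfl⟩) (A' := ⟨a', _⟩) (A'' := ⟨a'', _⟩)
      (mkHom f) (mkHom g)
  nat2 {a a'} _ _ γ :=
    (onFiber k θ (k a)).nat2 (A := ⟨a, rfl⟩) (A' := ⟨a', _⟩) (mkHom₂ γ)

end Glue

end PseudoCocone

section Main

variable {B : Type u} [Bicategory.{w, v} B]

theorem IsFiltered.isPseudofiltered (hB : IsFiltered.{w, v, u, w', v', u'} B) :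
    IsPseudofiltered.{w, v, u, w', v', u'} B :=
  fun C _ hC _ F => hB C hC F

theorem IsFiltered.connectedBicategory (hB : IsFiltered.{w, v, u, w', v', u'} B) :
    ConnectedBicategory B := by
  intro x y
  obtain ⟨S, ⟨θ⟩⟩ := hB _ (Thin.finiteBicategory (@Eq (ULift.{u'} Bool)))
    (discretePseudofunctor fun b => cond b.down x y)
  exact .tail (.single (.inl ⟨θ.app ⟨⟨true⟩⟩⟩)) (.inr ⟨θ.app ⟨⟨false⟩⟩⟩)

theorem IsPseudofiltered.isFiltered [Nonempty B] (hB : IsPseudofiltered.{w, v, u, w', v', u'} B)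
    (hconn : ConnectedBicategory B) : IsFiltered.{w, v, u, w', v', u'} B := by
  intro C _ hC F
  have : Finite C := hC.1
  have hfiber (i : Set C) : ∃ E : B, Nonempty (PseudoCocone (restrict F (component · = i)) E) :=
    hB _ (hC.fullSubbicategory _) (connectedBicategory_component_fiber i) _
  choose E θ using hfiber
  obtain ⟨S, e⟩ := hB.sup_objs_exists hconn E
  exact ⟨S, ⟨.glue component (fun i => (θ i).some.whisker (e i).some) component_eq_of_hom⟩⟩

end Main

/-- A non-empty bicategory is filtered if and only if it is pseudofiltered and connected. -/
theorem filtered_iff_pseudofiltered_and_connected (B : Type u) [Bicategory.{w, v} B]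
    [Nonempty B] :
    IsFiltered.{w, v, u, w', v', u'} B ↔
      IsPseudofiltered.{w, v, u, w', v', u'} B ∧ ConnectedBicategory B :=
  ⟨fun h => ⟨h.isPseudofiltered, h.connectedBicategory⟩,
    fun ⟨h, hconn⟩ => h.isFiltered hconn⟩

end Paper
end

section
/- Let B be a bicategory satisfying axioms (0-pFlt), (1-pFlt) and (2-pFlt). Then for any 1-cells u : C → A and v : C → B there exist an object D, 1-cells r : A → D and s : B → D, and an invertible 2-cell γ : r ∘ u ≅ s ∘ v. -/
open CategoryTheory Bicategory

universe w v u

namespace Paper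

/-- Axiom (0-pFlt). -/
def PFlt0 (B : Type u) [Bicategory.{w, v} B] : Prop :=
  ∀ ⦃A B' C : B⦄ (_ : C ⟶ A) (_ : C ⟶ B'), ∃ (D : B) (_ : A ⟶ D) (_ : B' ⟶ D), True

/-- Axiom (1-pFlt). -/
def PFlt1 (B : Type u) [Bicategory.{w, v} B] : Prop :=
  ∀ ⦃A B' : B⦄ (f g : A ⟶ B'), ∃ (C : B) (u : B' ⟶ C) (_ : f ≫ u ⟶ g ≫ u), True

/-- Axiom (2-pFlt). -/
def PFlt2 (B : Type u) [Bicategory.{w, v} B] : Prop :=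
  ∀ ⦃A B' : B⦄ (f g : A ⟶ B') (α β : f ⟶ g), ∃ (C : B) (u : B' ⟶ C), α ▷ u = β ▷ u

/-- Under (0-pFlt), (1-pFlt) and (2-pFlt), one can add the existence of an invertible 2-cell
`γ : r ∘ u ≅ s ∘ v` to the consequence of (0-pFlt). -/
theorem pflt0_with_two_cell (B : Type u) [Bicategory.{w, v} B]
    (h0 : PFlt0 B) (h1 : PFlt1 B) (h2 : PFlt2 B) :
    ∀ ⦃A B' C : B⦄ (u : C ⟶ A) (v : C ⟶ B'),
      ∃ (D : B) (r : A ⟶ D) (s : B' ⟶ D), Nonempty (u ≫ r ≅ v ≫ s) := by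
  intro A B' C u v
  obtain ⟨D0, r, s, -⟩ := h0 u v
  -- comparison 2-cell
  obtain ⟨D1, w1, γ, -⟩ := h1 (u ≫ r) (v ≫ s)
  -- reverse 2-cell
  obtain ⟨D2, w2, δ, -⟩ := h1 ((v ≫ s) ≫ w1) ((u ≫ r) ≫ w1)
  -- make one composite the identity
  obtain ⟨D3, w3, h3⟩ := h2 _ _ ((γ ▷ w2) ≫ δ) (𝟙 (((u ≫ r) ≫ w1) ≫ w2))
  -- make the other composite the identity
  obtain ⟨D4, w4, h4⟩ := h2 _ _ ((δ ▷ w3) ≫ ((γ ▷ w2) ▷ w3))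
      (𝟙 ((((v ≫ s) ≫ w1) ≫ w2) ≫ w3))
  refine ⟨D4, r ≫ w1 ≫ w2 ≫ w3 ≫ w4, s ≫ w1 ≫ w2 ≫ w3 ≫ w4, ⟨?_⟩⟩
  have core : ((((u ≫ r) ≫ w1) ≫ w2) ≫ w3) ≫ w4 ≅ ((((v ≫ s) ≫ w1) ≫ w2) ≫ w3) ≫ w4 := by
    refine ⟨((γ ▷ w2) ▷ w3) ▷ w4, (δ ▷ w3) ▷ w4, ?_, ?_⟩
    · calc (((γ ▷ w2) ▷ w3) ▷ w4) ≫ ((δ ▷ w3) ▷ w4)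
          = ((((γ ▷ w2) ≫ δ) ▷ w3) ▷ w4) := by
            rw [← comp_whiskerRight, ← comp_whiskerRight]
        _ = _ := by rw [h3]; simp
    · calc ((δ ▷ w3) ▷ w4) ≫ (((γ ▷ w2) ▷ w3) ▷ w4)
          = (((δ ▷ w3) ≫ ((γ ▷ w2) ▷ w3)) ▷ w4) := by rw [← comp_whiskerRight]
        _ = _ := by rw [h4]; simp
  calc u ≫ r ≫ w1 ≫ w2 ≫ w3 ≫ w4
      ≅ ((((u ≫ r) ≫ w1) ≫ w2) ≫ w3) ≫ w4 := by
        exact BicategoricalCoherence.iso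
    _ ≅ ((((v ≫ s) ≫ w1) ≫ w2) ≫ w3) ≫ w4 := core
    _ ≅ v ≫ s ≫ w1 ≫ w2 ≫ w3 ≫ w4 := by
        exact BicategoricalCoherence.iso
  
end Paper
end

section
/- Let W be a class of 1-cells of a bicategory B that contains all equivalences, is stable under composition, is closed under invertible 2-cells, and satisfies (0-Frc), (1-Frc) and (2-Frc). Then W satisfies the final clause of Pronk's axiom BF4: for every w : C → D in W, parallel 1-cells f, g : B → C, 2-cell α : w ∘ f ⟹ w ∘ g, and any two triples (A₁, u₁, β₁) and (A₂, u₂, β₂), where uᵢ : Aᵢ → B lies in W and βᵢ : f ∘ uᵢ ⟹ g ∘ uᵢ satisfies a_{w,g,uᵢ} ∘ (α ▷ uᵢ) = (w ◁ βᵢ) ∘ a_{w,f,uᵢ}, there exist an object X, 1-cells s : X → A₁ and t : X → A₂, and an invertible 2-cell ε : u₁ ∘ s ≅ u₂ ∘ t such that u₁ ∘ s and u₂ ∘ t lie in W and the following two composite 2-cells from f ∘ (u₁ ∘ s) to g ∘ (u₂ ∘ t) agree: f ∘ (u₁ ∘ s) ⟹(f ◁ ε) f ∘ (u₂ ∘ t)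 ⟹(a⁻¹) (f ∘ u₂) ∘ t ⟹(β₂ ▷ t) (g ∘ u₂) ∘ t ⟹(a) g ∘ (u₂ ∘ t) equals f ∘ (u₁ ∘ s) ⟹(a⁻¹) (f ∘ u₁) ∘ s ⟹(β₁ ▷ s) (g ∘ u₁) ∘ s ⟹(a) g ∘ (u₁ ∘ s) ⟹(g ◁ ε) g ∘ (u₂ ∘ t), where a denotes associators. -/
/-!
Given `w`, `α` and two solutions `(u₁, β₁)`, `(u₂, β₂)` of (1-Frc), first fill the cospan
`u₁ → B' ← u₂` by (0-Frc), getting `ε₀ : s₀ ≫ u₁ ≅ t₀ ≫ u₂`. The two composite 2-cells to be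
compared need not agree yet, but they do after whiskering with `w`: there both reduce to `α`
interchanged with `ε₀`. Hence (2-Frc) supplies `u' ∈ W` equalising them, and precomposing
the square with `u'` gives the required `(s, t, ε')`.
-/

open CategoryTheory Bicategory

universe w v u

namespace Paper

variable (B : Type u) [Bicategory.{w, v} B]

/-- A 1-cell is an equivalence if there is a 1-cell in the opposite direction and invertible
2-cells relating the two composites to identities. -/
def IsEquiv1Cell {a b : B} (f : a ⟶ b) : Prop :=
  ∃ g : b ⟶ a, Nonempty (f ≫ g ≅ 𝟙 a) ∧ Nonempty (g ≫ f ≅ 𝟙 b)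

/-- Axiom (0-Frc). -/
def Frc0 (W : ∀ ⦃a b : B⦄, (a ⟶ b) → Prop) : Prop :=
  ∀ ⦃A B' C : B⦄ (w : A ⟶ B') (f : C ⟶ B'), W w →
    ∃ (D : B) (u : D ⟶ C) (h : D ⟶ A), W u ∧ Nonempty (u ≫ f ≅ h ≫ w)

/-- Axiom (1-Frc). -/
def Frc1 (W : ∀ ⦃a b : B⦄, (a ⟶ b) → Prop) : Prop :=
  ∀ ⦃B' C D : B⦄ (w : C ⟶ D) (f g : B' ⟶ C), W w → ∀ α : f ≫ w ⟶ g ≫ w,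
    ∃ (A : B) (u : A ⟶ B'), W u ∧ ∃ β : u ≫ f ⟶ u ≫ g,
      (u ◁ α) ≫ (α_ u g w).inv = (α_ u f w).inv ≫ (β ▷ w)

/-- Axiom (2-Frc). -/
def Frc2 (W : ∀ ⦃a b : B⦄, (a ⟶ b) → Prop) : Prop :=
  ∀ ⦃B' C D : B⦄ (w : C ⟶ D) (f g : B' ⟶ C), W w → ∀ α β : f ⟶ g,
    α ▷ w = β ▷ w → ∃ (A : B) (u : A ⟶ B'), W u ∧ u ◁ α = u ◁ β

section CompatibleTwoCells

variable {B} {X A₁ A₂ B' C : B} {s : X ⟶ A₁} {t : X ⟶ A₂} {u₁ : A₁ ⟶ B'} {u₂ : A₂ ⟶ B'}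
  {f g : B' ⟶ C}

/-- The final clause of BF4 for a square `θ` says `composeSecond θ β₂ = composeFirst β₁ θ`. -/
def composeSecond (θ : s ≫ u₁ ⟶ t ≫ u₂) (β₂ : u₂ ≫ f ⟶ u₂ ≫ g) :
    (s ≫ u₁) ≫ f ⟶ (t ≫ u₂) ≫ g :=
  (θ ▷ f) ≫ (α_ t u₂ f).hom ≫ (t ◁ β₂) ≫ (α_ t u₂ g).inv

def composeFirst (β₁ : u₁ ≫ f ⟶ u₁ ≫ g) (θ : s ≫ u₁ ⟶ t ≫ u₂) :
    (s ≫ u₁) ≫ f ⟶ (t ≫ u₂) ≫ g :=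
  (α_ s u₁ f).hom ≫ (s ◁ β₁) ≫ (α_ s u₁ g).inv ≫ (θ ▷ g)

lemma whiskerRight_eq_of_frc1_eq {D : B} {w : C ⟶ D} {α : f ≫ w ⟶ g ≫ w} {u : A₁ ⟶ B'}
    {β : u ≫ f ⟶ u ≫ g} (hβ : (u ◁ α) ≫ (α_ u g w).inv = (α_ u f w).inv ≫ (β ▷ w)) :
    β ▷ w = (α_ u f w).hom ≫ (u ◁ α) ≫ (α_ u g w).inv := by
  rw [hβ, Iso.hom_inv_id_assoc]

lemma composeSecond_whiskerRight {D : B} {w : C ⟶ D} {α : f ≫ w ⟶ g ≫ w}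
    (θ : s ≫ u₁ ⟶ t ≫ u₂) {β₂ : u₂ ≫ f ⟶ u₂ ≫ g}
    (hβ₂ : (u₂ ◁ α) ≫ (α_ u₂ g w).inv = (α_ u₂ f w).inv ≫ (β₂ ▷ w)) :
    composeSecond θ β₂ ▷ w =
      (α_ (s ≫ u₁) f w).hom ≫ (θ ▷ (f ≫ w)) ≫ ((t ≫ u₂) ◁ α) ≫ (α_ (t ≫ u₂) g w).inv := by
  simp only [composeSecond, comp_whiskerRight, whisker_assoc, Category.assoc,
    whiskerRight_eq_of_frc1_eq hβ₂]
  bicategory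

lemma composeFirst_whiskerRight {D : B} {w : C ⟶ D} {α : f ≫ w ⟶ g ≫ w}
    {β₁ : u₁ ≫ f ⟶ u₁ ≫ g} (θ : s ≫ u₁ ⟶ t ≫ u₂)
    (hβ₁ : (u₁ ◁ α) ≫ (α_ u₁ g w).inv = (α_ u₁ f w).inv ≫ (β₁ ▷ w)) :
    composeFirst β₁ θ ▷ w =
      (α_ (s ≫ u₁) f w).hom ≫ ((s ≫ u₁) ◁ α) ≫ (θ ▷ (g ≫ w)) ≫ (α_ (t ≫ u₂) g w).inv := by
  simp only [composeFirst, comp_whiskerRight, whisker_assoc, Category.assoc,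
    whiskerRight_eq_of_frc1_eq hβ₁]
  bicategory

lemma composeSecond_whiskerRight_eq_composeFirst_whiskerRight {D : B} {w : C ⟶ D}
    {α : f ≫ w ⟶ g ≫ w} {β₁ : u₁ ≫ f ⟶ u₁ ≫ g} {β₂ : u₂ ≫ f ⟶ u₂ ≫ g}
    (θ : s ≫ u₁ ⟶ t ≫ u₂)
    (hβ₁ : (u₁ ◁ α) ≫ (α_ u₁ g w).inv = (α_ u₁ f w).inv ≫ (β₁ ▷ w))
    (hβ₂ : (u₂ ◁ α) ≫ (α_ u₂ g w).inv = (α_ u₂ f w).inv ≫ (β₂ ▷ w)) :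
    composeSecond θ β₂ ▷ w = composeFirst β₁ θ ▷ w := by
  rw [composeSecond_whiskerRight θ hβ₂, composeFirst_whiskerRight θ hβ₁,
    whisker_exchange_assoc]

def precompTwoCell {Y : B} (u' : Y ⟶ X) (θ : s ≫ u₁ ⟶ t ≫ u₂) :
    (u' ≫ s) ≫ u₁ ⟶ (u' ≫ t) ≫ u₂ :=
  (α_ u' s u₁).hom ≫ (u' ◁ θ) ≫ (α_ u' t u₂).inv

lemma composeSecond_precompTwoCell {Y : B} (u' : Y ⟶ X) (θ : s ≫ u₁ ⟶ t ≫ u₂)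
    (β₂ : u₂ ≫ f ⟶ u₂ ≫ g) :
    composeSecond (precompTwoCell u' θ) β₂ =
      ((α_ u' s u₁).hom ▷ f) ≫ (α_ u' (s ≫ u₁) f).hom ≫ (u' ◁ composeSecond θ β₂) ≫
        (α_ u' (t ≫ u₂) g).inv ≫ ((α_ u' t u₂).inv ▷ g) := by
  simp only [composeSecond, precompTwoCell]
  bicategory

lemma composeFirst_precompTwoCell {Y : B} (u' : Y ⟶ X) (θ : s ≫ u₁ ⟶ t ≫ u₂)
    (β₁ : u₁ ≫ f ⟶ u₁ ≫ g) :
    composeFirst β₁ (precompTwoCell u' θ) =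
      ((α_ u' s u₁).hom ▷ f) ≫ (α_ u' (s ≫ u₁) f).hom ≫ (u' ◁ composeFirst β₁ θ) ≫
        (α_ u' (t ≫ u₂) g).inv ≫ ((α_ u' t u₂).inv ▷ g) := by
  simp only [composeFirst, precompTwoCell]
  bicategory

lemma composeSecond_precompTwoCell_eq_composeFirst {Y : B} {u' : Y ⟶ X}
    {θ : s ≫ u₁ ⟶ t ≫ u₂} {β₁ : u₁ ≫ f ⟶ u₁ ≫ g} {β₂ : u₂ ≫ f ⟶ u₂ ≫ g}
    (h : u' ◁ composeSecond θ β₂ = u' ◁ composeFirst β₁ θ) :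
    composeSecond (precompTwoCell u' θ) β₂ = composeFirst β₁ (precompTwoCell u' θ) := by
  rw [composeSecond_precompTwoCell, composeFirst_precompTwoCell, h]

end CompatibleTwoCells

theorem bf4_final_clause (W : ∀ ⦃a b : B⦄, (a ⟶ b) → Prop)
    (hcomp : ∀ ⦃a b c : B⦄ (f : a ⟶ b) (g : b ⟶ c), W f → W g → W (f ≫ g))
    (hiso : ∀ ⦃a b : B⦄ (f w : a ⟶ b), W w → Nonempty (f ≅ w) → W f)
    (h0 : Frc0 B W) (h2 : Frc2 B W) :
    ∀ ⦃B' C D : B⦄ (w : C ⟶ D), W w → ∀ (f g : B' ⟶ C) (α : f ≫ w ⟶ g ≫ w)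
      (A₁ A₂ : B) (u₁ : A₁ ⟶ B') (u₂ : A₂ ⟶ B'), W u₁ → W u₂ →
      ∀ (β₁ : u₁ ≫ f ⟶ u₁ ≫ g) (β₂ : u₂ ≫ f ⟶ u₂ ≫ g),
        (u₁ ◁ α) ≫ (α_ u₁ g w).inv = (α_ u₁ f w).inv ≫ (β₁ ▷ w) →
        (u₂ ◁ α) ≫ (α_ u₂ g w).inv = (α_ u₂ f w).inv ≫ (β₂ ▷ w) →
        ∃ (X : B) (s : X ⟶ A₁) (t : X ⟶ A₂) (ε' : s ≫ u₁ ≅ t ≫ u₂),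
          W (s ≫ u₁) ∧ W (t ≫ u₂) ∧
            (ε'.hom ▷ f) ≫ (α_ t u₂ f).hom ≫ (t ◁ β₂) ≫ (α_ t u₂ g).inv =
              (α_ s u₁ f).hom ≫ (s ◁ β₁) ≫ (α_ s u₁ g).inv ≫ (ε'.hom ▷ g) := by
  intro B' C D w hw f g α A₁ A₂ u₁ u₂ hu₁ hu₂ β₁ β₂ hβ₁ hβ₂
  obtain ⟨X₀, s₀, t₀, hs₀, ⟨ε₀⟩⟩ := h0 u₂ u₁ hu₂
  obtain ⟨X, u', hu', hequal⟩ := h2 w _ _ hw _ _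
    (composeSecond_whiskerRight_eq_composeFirst_whiskerRight ε₀.hom hβ₁ hβ₂)
  let ε' : (u' ≫ s₀) ≫ u₁ ≅ (u' ≫ t₀) ≫ u₂ :=
    α_ u' s₀ u₁ ≪≫ whiskerLeftIso u' ε₀ ≪≫ (α_ u' t₀ u₂).symm
  have hW : W ((u' ≫ s₀) ≫ u₁) := hcomp _ _ (hcomp _ _ hu' hs₀) hu₁
  exact ⟨X, u' ≫ s₀, u' ≫ t₀, ε', hW, hiso _ _ hW ⟨ε'.symm⟩,
    composeSecond_precompTwoCell_eq_composeFirst hequal⟩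

end Paper
end

section
/- Let W be a class of 1-cells of a bicategory B that admits a right bicalculus of fractions. Let π₀B be the category with the same objects as B and with Hom(a, b) the set of connected components of the hom-category B(a, b) (the quotient of the set of 1-cells a → b by the equivalence relation generated by the existence of a 2-cell between them), with composition induced by that of B, and let W₀ be the class of morphisms of π₀B whose equivalence class contains some arrow of W. Then W₀ admits a one-dimensional right calculus of fractions in π₀B: W₀ contains all identities and is stable under composition; for every [w] : a → b in W₀ and [f] : c → b there exist [u] : d → c in W₀ and [h] : d → a with [f] ∘ [u] = [w] ∘ [h]; and for every pair [f], [g] : b → c and [w] : c → d in W₀ with [w] ∘ [f] = [w] ∘ [g], there exists [u] : a → b in W₀ with [f] ∘ [u] = [g] ∘ [u]. -/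
open CategoryTheory Bicategory

universe w v u

namespace Paper

variable (B : Type u) [Bicategory.{w, v} B]

/-- A class of 1-cells admits a right bicalculus of fractions. -/
structure RightBicalculus (W : ∀ ⦃a b : B⦄, (a ⟶ b) → Prop) : Prop where
  equivalences : ∀ ⦃a b : B⦄ (f : a ⟶ b), IsEquiv1Cell B f → W f
  comp : ∀ ⦃a b c : B⦄ (f : a ⟶ b) (g : b ⟶ c), W f → W g → W (f ≫ g)
  iso_closed : ∀ ⦃a b : B⦄ (f w : a ⟶ b), W w → Nonempty (f ≅ w) → W f
  frc0 : Frc0 B W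
  frc1 : Frc1 B W
  frc2 : Frc2 B W

/-- The objects of the category `π₀ B`. -/
structure Pi0 where
  obj : B

variable {B}

/-- `π₀ B` : same objects as `B`, hom-sets the connected components of the hom-categories,
composition induced by that of `B`. -/
instance Pi0.category : Category (Pi0 B) where
  Hom a b := Quot (fun f g : a.obj ⟶ b.obj => Nonempty (f ⟶ g))
  id a := Quot.mk _ (𝟙 a.obj)
  comp {a b c} := Quot.map₂ (· ≫ ·)
    (fun f _ _ h => h.elim fun η => ⟨f ◁ η⟩)
    (fun _ _ g h => h.elim fun η => ⟨η ▷ g⟩)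
  id_comp φ := Quot.inductionOn φ fun f => Quot.sound ⟨(λ_ f).hom⟩
  comp_id φ := Quot.inductionOn φ fun f => Quot.sound ⟨(ρ_ f).hom⟩
  assoc f g h := by
    induction f using Quot.ind
    induction g using Quot.ind
    induction h using Quot.ind
    exact Quot.sound ⟨(α_ _ _ _).hom⟩

/-- The class of arrows of `π₀ B` whose connected component contains some arrow of `W`. -/
def W0 (W : ∀ ⦃a b : B⦄, (a ⟶ b) → Prop) {a b : Pi0 B} (φ : a ⟶ b) : Prop :=
  ∃ w : a.obj ⟶ b.obj, W w ∧ Quot.mk _ w = φ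

/-!
Identities, composites and the Ore condition pass to `π₀ B` directly from the corresponding
properties of `W` and (0-Frc). For cancellation, `[f ≫ w] = [g ≫ w]` means that `f ≫ w` and
`g ≫ w` are joined by a zigzag of 2-cells. By (0-Frc) every 1-cell `x` of the zigzag has a
completion `u ≫ x ≅ h ≫ w` with `u ∈ W`, and (1-Frc) turns the 2-cell between two consecutive
1-cells into an agreement, after precomposition with a 1-cell of `W`, of their completions
`(u, h)` viewed as spans in `π₀ B`. These agreements compose by the Ore condition, and comparing
the completions `(𝟙, f)` of `f ≫ w` and `(𝟙, g)` of `g ≫ w` yields `t ∈ W` with `[t ≫ f] = [t ≫ g]`.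
-/

section SpanRel

variable {C : Type*} [Category C] (W : MorphismProperty C)

/-- A one-sided variant of `MorphismProperty.RightFractionRel`, transitive by the Ore condition
alone. -/
def SpanRel {X Y A A' : C} (u : A ⟶ X) (h : A ⟶ Y) (u' : A' ⟶ X) (h' : A' ⟶ Y) : Prop :=
  ∃ (E : C) (t : E ⟶ A) (t' : E ⟶ A'), W t ∧ t ≫ u = t' ≫ u' ∧ t ≫ h = t' ≫ h'

variable {W}

lemma SpanRel.trans [W.IsStableUnderComposition]
    (ore : ∀ ⦃X Y Z : C⦄ (s : X ⟶ Z) (f : Y ⟶ Z), W s →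
      ∃ (Y' : C) (t : Y' ⟶ Y) (g : Y' ⟶ X), W t ∧ t ≫ f = g ≫ s)
    {X Y A₁ A₂ A₃ : C} {u₁ : A₁ ⟶ X} {h₁ : A₁ ⟶ Y} {u₂ : A₂ ⟶ X} {h₂ : A₂ ⟶ Y}
    {u₃ : A₃ ⟶ X} {h₃ : A₃ ⟶ Y}
    (h₁₂ : SpanRel W u₁ h₁ u₂ h₂) (h₂₃ : SpanRel W u₂ h₂ u₃ h₃) : SpanRel W u₁ h₁ u₃ h₃ := by
  obtain ⟨E, s, s', hs, hsu, hsh⟩ := h₁₂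
  obtain ⟨E', t, t', ht, htu, hth⟩ := h₂₃
  obtain ⟨F, m, n, hm, hmn⟩ := ore t s' ht
  refine ⟨F, m ≫ s, n ≫ t', W.comp_mem _ _ hm hs, ?_, ?_⟩
  · rw [Category.assoc, hsu, reassoc_of% hmn, htu, Category.assoc]
  · rw [Category.assoc, hsh, reassoc_of% hmn, hth, Category.assoc]

end SpanRel

lemma zag_of_iso_obj {J K : Type*} [Category J] [Category K] (F : J ⥤ K) {j₁ j₂ : J}
    {k₁ k₂ : K} (h : Zag j₁ j₂) (e₁ : F.obj j₁ ≅ k₁) (e₂ : F.obj j₂ ≅ k₂) : Zag k₁ k₂ :=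
  h.imp (Nonempty.map fun f => e₁.inv ≫ F.map f ≫ e₂.hom)
    (Nonempty.map fun f => e₂.inv ≫ F.map f ≫ e₁.hom)

namespace Pi0

def homMk {a b : B} (f : a ⟶ b) : (⟨a⟩ : Pi0 B) ⟶ ⟨b⟩ :=
  Quot.mk _ f

@[simp]
lemma homMk_id (a : B) : homMk (𝟙 a) = 𝟙 (⟨a⟩ : Pi0 B) :=
  rfl

@[simp]
lemma homMk_comp {a b c : B} (f : a ⟶ b) (g : b ⟶ c) : homMk (f ≫ g) = homMk f ≫ homMk g :=
  rfl

lemma homMk_eq_of_hom {a b : B} {f g : a ⟶ b} (η : f ⟶ g) : homMk f = homMk g :=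
  Quot.sound ⟨η⟩

lemma homMk_surjective {a b : Pi0 B} (φ : a ⟶ b) : ∃ f : a.obj ⟶ b.obj, homMk f = φ :=
  Quot.exists_rep φ

lemma zigzag_of_homMk_eq {a b : B} {f g : a ⟶ b} (h : homMk f = homMk g) : Zigzag f g :=
  zigzag_equivalence.eqvGen_iff.mp <|
    (Quot.eqvGen_exact h).mono fun _ _ ⟨η⟩ => Zigzag.of_hom η

end Pi0

open Pi0

def W0Property (W : ∀ ⦃a b : B⦄, (a ⟶ b) → Prop) : MorphismProperty (Pi0 B) :=
  fun _ _ φ => W0 W φ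

section RightBicalculus

variable {W : ∀ ⦃a b : B⦄, (a ⟶ b) → Prop} (hW : RightBicalculus B W)
include hW

lemma RightBicalculus.id_mem (a : B) : W (𝟙 a) :=
  hW.equivalences _ ⟨𝟙 a, ⟨λ_ _⟩, ⟨λ_ _⟩⟩

lemma W0_id (a : Pi0 B) : W0 W (𝟙 a) :=
  ⟨𝟙 a.obj, hW.id_mem a.obj, rfl⟩

lemma W0_comp ⦃a b c : Pi0 B⦄ (φ : a ⟶ b) (ψ : b ⟶ c) (hφ : W0 W φ) (hψ : W0 W ψ) :
    W0 W (φ ≫ ψ) := by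
  obtain ⟨u, hu, rfl⟩ := hφ
  obtain ⟨v, hv, rfl⟩ := hψ
  exact ⟨u ≫ v, hW.comp u v hu hv, rfl⟩

lemma W0Property.isStableUnderComposition : (W0Property W).IsStableUnderComposition :=
  ⟨fun f g => W0_comp hW f g⟩

lemma exists_W0_comp_eq ⦃a b c : Pi0 B⦄ (w : a ⟶ b) (f : c ⟶ b) (hw : W0 W w) :
    ∃ (d : Pi0 B) (u : d ⟶ c) (h : d ⟶ a), W0 W u ∧ u ≫ f = h ≫ w := by
  obtain ⟨w, hw, rfl⟩ := hw
  obtain ⟨f, rfl⟩ := homMk_surjective f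
  obtain ⟨D, u, h, hu, ⟨θ⟩⟩ := hW.frc0 w f hw
  exact ⟨⟨D⟩, homMk u, homMk h, ⟨u, hu, rfl⟩, homMk_eq_of_hom θ.hom⟩

lemma exists_W0_homMk_eq_of_zag {b c d : B} {w : c ⟶ d} (hw : W w) {f g : b ⟶ c}
    (h : Zag (f ≫ w) (g ≫ w)) :
    ∃ (a : Pi0 B) (t : a ⟶ ⟨b⟩), W0 W t ∧ t ≫ homMk f = t ≫ homMk g := by
  rcases h with ⟨⟨γ⟩⟩ | ⟨⟨γ⟩⟩
  · obtain ⟨A, t, ht, β, -⟩ := hW.frc1 w f g hw γ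
    exact ⟨⟨A⟩, homMk t, ⟨t, ht, rfl⟩, homMk_eq_of_hom β⟩
  · obtain ⟨A, t, ht, β, -⟩ := hW.frc1 w g f hw γ
    exact ⟨⟨A⟩, homMk t, ⟨t, ht, rfl⟩, (homMk_eq_of_hom β).symm⟩

lemma spanRel_of_zag {b c d : B} {w : c ⟶ d} (hw : W w) {x y : b ⟶ d} (hxy : Zag x y)
    {A A' : B} {u : A ⟶ b} {u' : A' ⟶ b} {h : A ⟶ c} {h' : A' ⟶ c}
    (hu' : W u') (θ : u ≫ x ≅ h ≫ w) (θ' : u' ≫ y ≅ h' ≫ w) :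
    SpanRel (W0Property W) (homMk u) (homMk h) (homMk u') (homMk h') := by
  obtain ⟨D, v, k, hv, ⟨φ⟩⟩ := hW.frc0 u' u hu'
  have hzag : Zag ((v ≫ h) ≫ w) ((k ≫ h') ≫ w) :=
    zag_of_iso_obj (precomp d (v ≫ u)) hxy
      (α_ v u x ≪≫ whiskerLeftIso v θ ≪≫ (α_ v h w).symm)
      (whiskerRightIso φ y ≪≫ α_ k u' y ≪≫ whiskerLeftIso k θ' ≪≫ (α_ k h' w).symm)
  obtain ⟨E, t, ht, hth⟩ := exists_W0_homMk_eq_of_zag hW hw hzag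
  refine ⟨E, t ≫ homMk v, t ≫ homMk k, W0_comp hW _ _ ht ⟨v, hv, rfl⟩, ?_, ?_⟩
  · simp only [Category.assoc, ← homMk_comp, homMk_eq_of_hom φ.hom]
  · simpa only [Category.assoc, homMk_comp] using hth

lemma spanRel_of_zigzag {b c d : B} {w : c ⟶ d} (hw : W w) {f : b ⟶ c} {y : b ⟶ d}
    (hy : Zigzag (f ≫ w) y) {A : B} {u : A ⟶ b} {h : A ⟶ c} (hu : W u) (θ : u ≫ y ≅ h ≫ w) :
    SpanRel (W0Property W) (𝟙 _) (homMk f) (homMk u) (homMk h) := by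
  induction hy generalizing A with
  | refl => exact spanRel_of_zag hW hw (Zag.refl _) hu (λ_ _) θ
  | tail _ hxy ih =>
    obtain ⟨D, u₀, h₀, hu₀, ⟨θ₀⟩⟩ := hW.frc0 w _ hw
    have := W0Property.isStableUnderComposition hW
    exact (ih hu₀ θ₀).trans (W := W0Property W) (fun _ _ _ s f => exists_W0_comp_eq hW s f)
      (spanRel_of_zag hW hw hxy hu θ₀ θ)

lemma exists_W0_comp_eq_comp_of_comp_eq ⦃b c d : Pi0 B⦄ (f g : b ⟶ c) (w : c ⟶ d)
    (hw : W0 W w) (hfg : f ≫ w = g ≫ w) : ∃ (a : Pi0 B) (u : a ⟶ b), W0 W u ∧ u ≫ f = u ≫ g := by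
  obtain ⟨w, hw, rfl⟩ := hw
  obtain ⟨f, rfl⟩ := homMk_surjective f
  obtain ⟨g, rfl⟩ := homMk_surjective g
  obtain ⟨E, t, t', ht, htt', hfg⟩ :=
    spanRel_of_zigzag hW hw (zigzag_of_homMk_eq hfg) (hW.id_mem _) (λ_ (g ≫ w))
  obtain rfl : t = t' := by simpa using htt'
  exact ⟨E, t, ht, hfg⟩

end RightBicalculus

/-- If `W` admits a right bicalculus of fractions in `B`, then `W₀` admits a one-dimensional
right calculus of fractions in `π₀ B`. -/
theorem pi0_fractions (W : ∀ ⦃a b : B⦄, (a ⟶ b) → Prop) (hW : RightBicalculus B W) :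
    (∀ a : Pi0 B, W0 W (𝟙 a)) ∧
    (∀ ⦃a b c : Pi0 B⦄ (φ : a ⟶ b) (ψ : b ⟶ c), W0 W φ → W0 W ψ → W0 W (φ ≫ ψ)) ∧
    (∀ ⦃a b c : Pi0 B⦄ (w : a ⟶ b) (f : c ⟶ b), W0 W w →
      ∃ (d : Pi0 B) (u : d ⟶ c) (h : d ⟶ a), W0 W u ∧ u ≫ f = h ≫ w) ∧
    (∀ ⦃b c d : Pi0 B⦄ (f g : b ⟶ c) (w : c ⟶ d), W0 W w → f ≫ w = g ≫ w →
      ∃ (a : Pi0 B) (u : a ⟶ b), W0 W u ∧ u ≫ f = u ≫ g) :=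
  ⟨W0_id hW, W0_comp hW, exists_W0_comp_eq hW, exists_W0_comp_eq_comp_of_comp_eq hW⟩

end Paper
end

section
/- Let B be a pseudocofiltered bicategory, i.e., B satisfies the dual axioms: (0-pFlt^op) for any 1-cells u : A → C and v : B → C there exist an object D and 1-cells r : D → A, s : D → B; (1-pFlt^op) for any parallel 1-cells f, g : A → B there exist an object C, a 1-cell u : C → A and a 2-cell γ : f ∘ u ⟹ g ∘ u; (2-pFlt^op) for any parallel 2-cells α, β : f ⟹ g : A → B there exist an object C and a 1-cell u : C → A with α ▷ u = β ▷ u. Then the class of all 1-cells of B admits a right bicalculus of fractions; in particular it satisfies (0-Frc), (1-Frc) and (2-Frc). -/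
open CategoryTheory Bicategory

universe w v u

namespace Paper

variable (B : Type u) [Bicategory.{w, v} B]

/-- Axiom (0-pFlt)ᵒᵖ. -/
def PFlt0op : Prop :=
  ∀ ⦃A B' C : B⦄ (_ : A ⟶ C) (_ : B' ⟶ C), ∃ (D : B) (_ : D ⟶ A) (_ : D ⟶ B'), True

/-- Axiom (1-pFlt)ᵒᵖ. -/
def PFlt1op : Prop :=
  ∀ ⦃A B' : B⦄ (f g : A ⟶ B'), ∃ (C : B) (u : C ⟶ A) (_ : u ≫ f ⟶ u ≫ g), True

/-- Axiom (2-pFlt)ᵒᵖ. -/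
def PFlt2op : Prop :=
  ∀ ⦃A B' : B⦄ (f g : A ⟶ B') (α β : f ⟶ g), ∃ (C : B) (u : C ⟶ A), u ◁ α = u ◁ β

/-- If `B` is pseudocofiltered then the class of all 1-cells of `B` admits a right bicalculus
of fractions (in particular it satisfies (0-Frc), (1-Frc) and (2-Frc)). -/
theorem pseudocofiltered_implies_fractions
    (h0 : PFlt0op B) (h1 : PFlt1op B) (h2 : PFlt2op B) :
    RightBicalculus B (fun _ _ _ => True) := by
  constructor
  · intro a b f _; trivial
  · intro a b c f g _ _; trivial
  · intro a b f w _ _; trivial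
  · -- Frc0
    intro A B' C w f _
    obtain ⟨D, r, s, -⟩ := h0 w f
    obtain ⟨D₁, u₁, γ, -⟩ := h1 (s ≫ f) (r ≫ w)
    obtain ⟨D₂, u₂, δ, -⟩ := h1 (u₁ ≫ r ≫ w) (u₁ ≫ s ≫ f)
    obtain ⟨D₃, u₃, hσ⟩ := h2 _ _ ((u₂ ◁ γ) ≫ δ) (𝟙 _)
    obtain ⟨D₄, u₄, hτ⟩ := h2 _ _ (u₃ ◁ (δ ≫ (u₂ ◁ γ))) (𝟙 _)
    refine ⟨D₄, u₄ ≫ u₃ ≫ u₂ ≫ u₁ ≫ s, u₄ ≫ u₃ ≫ u₂ ≫ u₁ ≫ r, trivial, ?_⟩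
    have hinv1 : (u₄ ◁ u₃ ◁ u₂ ◁ γ) ≫ (u₄ ◁ u₃ ◁ δ) = 𝟙 _ := by
      rw [← Bicategory.whiskerLeft_comp, ← Bicategory.whiskerLeft_comp, hσ]
      simp
    have hinv2 : (u₄ ◁ u₃ ◁ δ) ≫ (u₄ ◁ u₃ ◁ u₂ ◁ γ) = 𝟙 _ := by
      rw [← Bicategory.whiskerLeft_comp]
      have : (u₃ ◁ δ) ≫ (u₃ ◁ u₂ ◁ γ) = u₃ ◁ (δ ≫ (u₂ ◁ γ)) := by
        rw [Bicategory.whiskerLeft_comp]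
      rw [this, hτ]
      simp
    have Γ : u₄ ≫ u₃ ≫ u₂ ≫ u₁ ≫ s ≫ f ≅ u₄ ≫ u₃ ≫ u₂ ≫ u₁ ≫ r ≫ w :=
      ⟨u₄ ◁ u₃ ◁ u₂ ◁ γ, u₄ ◁ u₃ ◁ δ, hinv1, hinv2⟩
    refine ⟨?_ ≪≫ Γ ≪≫ ?_⟩
    · exact α_ _ _ _ ≪≫ whiskerLeftIso u₄ (α_ _ _ _ ≪≫ whiskerLeftIso u₃
        (α_ _ _ _ ≪≫ whiskerLeftIso u₂ (α_ u₁ s f)))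
    · exact (α_ _ _ _ ≪≫ whiskerLeftIso u₄ (α_ _ _ _ ≪≫ whiskerLeftIso u₃
        (α_ _ _ _ ≪≫ whiskerLeftIso u₂ (α_ u₁ r w)))).symm
  · -- Frc1
    intro B' C D w f g _ α
    obtain ⟨A, u, β₀, -⟩ := h1 f g
    obtain ⟨A', v, hv⟩ := h2 _ _
      ((α_ u f w).hom ≫ (u ◁ α) ≫ (α_ u g w).inv) (β₀ ▷ w)
    refine ⟨A', v ≫ u, trivial,
      (α_ v u f).hom ≫ (v ◁ β₀) ≫ (α_ v u g).inv, ?_⟩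
    simp only [Bicategory.whiskerLeft_comp] at hv
    have hv' : (v ◁ (u ◁ α)) ≫ (v ◁ (α_ u g w).inv) =
        (v ◁ (α_ u f w).inv) ≫ (v ◁ (β₀ ▷ w)) := by
      rw [← hv]; simp
    calc ((v ≫ u) ◁ α) ≫ (α_ (v ≫ u) g w).inv
        = (α_ v u (f ≫ w)).hom ≫ (v ◁ (u ◁ α)) ≫
            (v ◁ (α_ u g w).inv) ≫ (α_ v (u ≫ g) w).inv ≫
            ((α_ v u g).inv ▷ w) := by bicategory
      _ = (α_ v u (f ≫ w)).hom ≫ (v ◁ (α_ u f w).inv) ≫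
            (v ◁ (β₀ ▷ w)) ≫ (α_ v (u ≫ g) w).inv ≫
            ((α_ v u g).inv ▷ w) := by
          rw [reassoc_of% hv']
      _ = (α_ (v ≫ u) f w).inv ≫
            (((α_ v u f).hom ≫ (v ◁ β₀) ≫ (α_ v u g).inv) ▷ w) := by
          bicategory
  · -- Frc2
    intro B' C D w f g _ α β _
    obtain ⟨A, u, hu⟩ := h2 f g α β
    exact ⟨A, u, trivial, hu⟩

end Paper
end

section
/- Let B be a bicategory with a biterminal object T, i.e., for every object E the hom-category B(E, T) is non-empty and between any two parallel 1-cells E → T there is exactly one 2-cell, which is invertible. Let W be a class of 1-cells of B that admits a right bicalculus of fractions and contains every 1-cell with codomain T. Then B is cofiltered: it satisfies (0-Flt^op) for any objects A, B there exist an object C and 1-cells u : C → A, v : C → B; (1-Flt^op) for any parallel 1-cells f, g : A → B there exist an object C, a 1-cell u : C → A and a 2-cell γ : f ∘ u ⟹ g ∘ u; and (2-Flt^op) for any parallel 2-cells α, β : f ⟹ g : A → B there exist an object C and a 1-cell u : C → A with α ▷ u = β ▷ u. -/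
open CategoryTheory Bicategory

universe w v u

namespace Paper

variable (B : Type u) [Bicategory.{w, v} B]

/-- If `B` has a biterminal object `T` and `W` admits a right bicalculus of fractions and
contains every 1-cell with codomain `T`, then `B` is cofiltered: it satisfies (0-Flt)ᵒᵖ,
(1-Flt)ᵒᵖ and (2-Flt)ᵒᵖ. -/
theorem fractions_implies_cofiltered (T : B)
    (hne : ∀ E : B, Nonempty (E ⟶ T))
    (hcell : ∀ ⦃E : B⦄ (f g : E ⟶ T), Nonempty (f ⟶ g))
    (huniq : ∀ ⦃E : B⦄ (f g : E ⟶ T) (η η' : f ⟶ g), η = η')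
    (hinv : ∀ ⦃E : B⦄ (f g : E ⟶ T) (η : f ⟶ g), IsIso η)
    (W : ∀ ⦃a b : B⦄, (a ⟶ b) → Prop) (hW : RightBicalculus B W)
    (hT : ∀ ⦃E : B⦄ (f : E ⟶ T), W f) :
    (∀ A B' : B, ∃ (C : B) (_ : C ⟶ A) (_ : C ⟶ B'), True) ∧
    (∀ ⦃A B' : B⦄ (f g : A ⟶ B'), ∃ (C : B) (u : C ⟶ A) (_ : u ≫ f ⟶ u ≫ g), True) ∧
    (∀ ⦃A B' : B⦄ (f g : A ⟶ B') (α β : f ⟶ g), ∃ (C : B) (u : C ⟶ A), u ◁ α = u ◁ β) := by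
  refine ⟨?_, ?_, ?_⟩
  · intro A B'
    obtain ⟨tA⟩ := hne A
    obtain ⟨tB⟩ := hne B'
    obtain ⟨D, u, h, _, _⟩ := hW.frc0 tA tB (hT tA)
    exact ⟨D, h, u, trivial⟩
  · intro A B' f g
    obtain ⟨t⟩ := hne B'
    obtain ⟨α⟩ := hcell (f ≫ t) (g ≫ t)
    obtain ⟨C, u, _, β, _⟩ := hW.frc1 t f g (hT t) α
    exact ⟨C, u, β, trivial⟩
  · intro A B' f g α β
    obtain ⟨t⟩ := hne B'
    obtain ⟨C, u, _, h⟩ := hW.frc2 t f g (hT t) α β (huniq _ _ _ _)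
    exact ⟨C, u, h⟩

end Paper
end

section
/- (Lifting Fractions Lemma) Let P : E → B be a pseudofunctor between bicategories that is a 1-fibration, and let W be a class of 1-cells of B that admits a right bicalculus of fractions. Then the class C_W of P-Cartesian 1-cells of E whose image under P lies in W admits a right bicalculus of fractions in E. -/
/-!
Each axiom for `C_W` is obtained from the corresponding axiom for `W`, applied to the images
under `P`: the 1-cell `u ∈ W` it produces is lifted to a Cartesian 1-cell `û` with `P û = u`
(this is where `P` is a 1-fibration), and the Cartesian property of the given `w ∈ C_W` lifts
the remaining 1-cells and 2-cells along `w`. The closure axioms hold because Cartesian 1-cells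
contain the equivalences (whiskering by an equivalence is bijective on 2-cells, in `E` and in
`B`) and are closed under composition and invertible 2-cells, while `P` preserves equivalences
and sends composites and invertible 2-cells to invertible 2-cells.
-/

open CategoryTheory Bicategory

universe w₁ v₁ u₁ w₂ v₂ u₂ w v u

namespace Paper

section Cartesian

variable {E : Type u₁} [Bicategory.{w₁, v₁} E] {B : Type u₂} [Bicategory.{w₂, v₂} B]

/-- A 1-cell `f : X ⟶ Y` of `E` is `P`-Cartesian. -/
def IsCartesian (P : Pseudofunctor E B) {X Y : E} (f : X ⟶ Y) : Prop :=
  (∀ (Z : E) (g : Z ⟶ Y) (h : P.obj Z ⟶ P.obj X) (α : h ≫ P.map f ≅ P.map g),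
    ∃ (hHat : Z ⟶ X) (aHat : hHat ≫ f ≅ g) (bHat : P.map hHat ≅ h),
      (bHat.hom ▷ P.map f) ≫ α.hom = (P.mapComp hHat f).inv ≫ P.map₂ aHat.hom) ∧
  (∀ (Z : E) (g h : Z ⟶ X) (α : g ≫ f ⟶ h ≫ f) (β : P.map g ⟶ P.map h),
    P.map₂ α = (P.mapComp g f).hom ≫ (β ▷ P.map f) ≫ (P.mapComp h f).inv →
      ∃ bHat : g ⟶ h, P.map₂ bHat = β ∧ bHat ▷ f = α) ∧
  (∀ (Z : E) (g h : Z ⟶ X) (α β : g ⟶ h), P.map₂ α = P.map₂ β → α ▷ f = β ▷ f → α = β)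

/-- `P` is a 1-fibration: every 1-cell into the image of an object admits a Cartesian lift. -/
def Is1Fibration (P : Pseudofunctor E B) : Prop :=
  ∀ (E₀ : E) ⦃B₀ : B⦄ (f : B₀ ⟶ P.obj E₀),
    ∃ (Bhat : E) (fhat : Bhat ⟶ E₀) (hB : P.obj Bhat = B₀),
      IsCartesian P fhat ∧ P.map fhat = cast (congrArg (fun x => (x ⟶ P.obj E₀)) hB.symm) f

end Cartesian

end Paper

namespace CategoryTheory.Bicategory.Adjunction

variable {B : Type u} [Bicategory.{w, v} B] {a b c : B} {l : a ⟶ b} {r : b ⟶ a} (adj : l ⊣ r)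
  {k m : c ⟶ a}

lemma homEquiv₂_whiskerRight (γ : k ⟶ m) :
    adj.homEquiv₂ (γ ▷ l) = γ ≫ adj.homEquiv₂ (𝟙 (m ≫ l)) := by
  simp only [homEquiv₂_apply, id_whiskerRight, Category.comp_id]
  rw [← associator_inv_naturality_left, whisker_exchange_assoc,
    ← rightUnitor_inv_naturality_assoc]

lemma isIso_homEquiv₂_id [IsIso adj.unit] : IsIso (adj.homEquiv₂ (𝟙 (m ≫ l))) := by
  rw [homEquiv₂_apply]; infer_instance

include adj in
lemma whiskerRight_injective [IsIso adj.unit] :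
    Function.Injective (fun γ : k ⟶ m => γ ▷ l) := by
  intro γ δ h
  have := adj.isIso_homEquiv₂_id (m := m)
  rw [← cancel_mono (adj.homEquiv₂ (𝟙 (m ≫ l))), ← homEquiv₂_whiskerRight,
    ← homEquiv₂_whiskerRight]
  exact congrArg _ h

include adj in
lemma whiskerRight_surjective [IsIso adj.unit] :
    Function.Surjective (fun γ : k ⟶ m => γ ▷ l) := by
  intro α
  have := adj.isIso_homEquiv₂_id (m := m)
  refine ⟨adj.homEquiv₂ α ≫ inv (adj.homEquiv₂ (𝟙 (m ≫ l))), adj.homEquiv₂.injective ?_⟩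
  rw [homEquiv₂_whiskerRight]
  simp

include adj in
lemma exists_iso_whiskerRight_eq [IsIso adj.unit] (α : k ≫ l ≅ m ≫ l) :
    ∃ γ : k ≅ m, γ.hom ▷ l = α.hom := by
  obtain ⟨γ, hγ⟩ := adj.whiskerRight_surjective α.hom
  obtain ⟨δ, hδ⟩ := adj.whiskerRight_surjective α.inv
  refine ⟨⟨γ, δ, adj.whiskerRight_injective ?_, adj.whiskerRight_injective ?_⟩, hγ⟩ <;>
    simp [hγ, hδ]

end CategoryTheory.Bicategory.Adjunction

namespace CategoryTheory.Pseudofunctor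

variable {B : Type u₁} [Bicategory.{w₁, v₁} B] {C : Type u₂} [Bicategory.{w₂, v₂} C]
  (F : Pseudofunctor B C)

lemma map₂_associator_inv {a b c d : B} (f : a ⟶ b) (g : b ⟶ c) (h : c ⟶ d) :
    F.map₂ (α_ f g h).inv = (F.mapComp f (g ≫ h)).hom ≫ F.map f ◁ (F.mapComp g h).hom ≫
      (α_ (F.map f) (F.map g) (F.map h)).inv ≫ (F.mapComp f g).inv ▷ F.map h ≫
      (F.mapComp (f ≫ g) h).inv := by
  rw [mapComp_assoc_left_inv]
  simp

end CategoryTheory.Pseudofunctor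

namespace Paper

open Category

section Cartesian

variable {E : Type u₁} [Bicategory.{w₁, v₁} E] {B : Type u₂} [Bicategory.{w₂, v₂} B]
  (P : Pseudofunctor E B)

theorem IsCartesian.of_adjunction {X Y : E} {f : X ⟶ Y} {g : Y ⟶ X} (adj : f ⊣ g)
    [IsIso adj.unit] [IsIso adj.counit] : IsCartesian P f := by
  have : IsIso (P.mapAdjunction adj).unit := by
    simp only [Pseudofunctor.mapAdjunction_unit]; infer_instance
  refine ⟨fun Z k h α => ?_, fun Z k l α β hα => ?_,
    fun Z k l α β _ h => adj.whiskerRight_injective h⟩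
  -- `k ≫ g` lifts `h`, the lifting 2-cell being found by unwhiskering along `P.map f`.
  · let e : (k ≫ g) ≫ f ≅ k := α_ k g f ≪≫ whiskerLeftIso k (asIso adj.counit) ≪≫ ρ_ k
    obtain ⟨b, hb⟩ := (P.mapAdjunction adj).exists_iso_whiskerRight_eq
      ((P.mapComp (k ≫ g) f).symm ≪≫ P.map₂Iso e ≪≫ α.symm)
    exact ⟨k ≫ g, e, b, by simp [hb]⟩
  · obtain ⟨γ, rfl⟩ := adj.whiskerRight_surjective α
    refine ⟨γ, (P.mapAdjunction adj).whiskerRight_injective ?_, rfl⟩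
    simpa using hα

theorem IsEquiv1Cell.exists_adjunction {X Y : E} {f : X ⟶ Y} (hf : IsEquiv1Cell E f) :
    ∃ (g : Y ⟶ X) (adj : f ⊣ g), IsIso adj.unit ∧ IsIso adj.counit := by
  obtain ⟨g, ⟨i₁⟩, ⟨i₂⟩⟩ := hf
  let e := Equivalence.mkOfAdjointifyCounit i₁.symm i₂
  exact ⟨g, ⟨e.unit.hom, e.counit.hom, e.left_triangle_hom, e.right_triangle_hom⟩,
    inferInstanceAs (IsIso e.unit.hom), inferInstanceAs (IsIso e.counit.hom)⟩

theorem IsEquiv1Cell.map {X Y : E} {f : X ⟶ Y} (hf : IsEquiv1Cell E f) :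
    IsEquiv1Cell B (P.map f) := by
  obtain ⟨g, ⟨i₁⟩, ⟨i₂⟩⟩ := hf
  exact ⟨P.map g, ⟨(P.mapComp f g).symm ≪≫ P.map₂Iso i₁ ≪≫ P.mapId X⟩,
    ⟨(P.mapComp g f).symm ≪≫ P.map₂Iso i₂ ≪≫ P.mapId Y⟩⟩

theorem IsEquiv1Cell.isCartesian {X Y : E} {f : X ⟶ Y} (hf : IsEquiv1Cell E f) :
    IsCartesian P f := by
  obtain ⟨g, adj, _, _⟩ := hf.exists_adjunction
  exact .of_adjunction P adj

theorem IsCartesian.of_iso {X Y : E} {f w : X ⟶ Y} (e : f ≅ w) (hw : IsCartesian P w) :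
    IsCartesian P f := by
  obtain ⟨hw₁, hw₂, hw₃⟩ := hw
  refine ⟨?_, ?_, ?_⟩
  · intro Z k h α
    obtain ⟨hH, aH, bH, heq⟩ := hw₁ Z k h (whiskerLeftIso h (P.map₂Iso e).symm ≪≫ α)
    refine ⟨hH, whiskerLeftIso hH e ≪≫ aH, bH, ?_⟩
    simp only [Iso.trans_hom, whiskerLeftIso_hom, PrelaxFunctor.map₂_comp,
      Pseudofunctor.map₂_whisker_left, assoc, ← heq]
    simp [whisker_exchange_assoc, ← Bicategory.whiskerLeft_comp_assoc]
  · intro Z k l α β hyp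
    have hcond : P.map₂ ((k ◁ e.inv) ≫ α ≫ (l ◁ e.hom)) =
        (P.mapComp k w).hom ≫ β ▷ P.map w ≫ (P.mapComp l w).inv := by
      simp only [PrelaxFunctor.map₂_comp, Pseudofunctor.map₂_whisker_left, hyp, assoc,
        Iso.inv_hom_id_assoc]
      rw [← whisker_exchange_assoc]
      simp only [← Bicategory.whiskerLeft_comp_assoc, PrelaxFunctor.map₂_inv_hom]
      simp
    obtain ⟨bH, hb1, hb2⟩ := hw₂ Z k l ((k ◁ e.inv) ≫ α ≫ (l ◁ e.hom)) β hcond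
    refine ⟨bH, hb1, ?_⟩
    rw [← cancel_mono (l ◁ e.hom), ← whisker_exchange, hb2]
    simp
  · intro Z k l α β hm hww
    apply hw₃ Z k l α β hm
    rw [← cancel_epi (k ◁ e.hom), whisker_exchange, whisker_exchange, hww]

theorem IsCartesian.comp {X Y Z₀ : E} {f : X ⟶ Y} {g : Y ⟶ Z₀}
    (hf : IsCartesian P f) (hg : IsCartesian P g) : IsCartesian P (f ≫ g) := by
  obtain ⟨hf₁, hf₂, hf₃⟩ := hf; obtain ⟨hg₁, hg₂, hg₃⟩ := hg
  refine ⟨?_, ?_, ?_⟩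
  · intro Z k h α
    obtain ⟨k₁, a₁, b₁, e₁⟩ := hg₁ Z k (h ≫ P.map f)
      (α_ h (P.map f) (P.map g) ≪≫ whiskerLeftIso h (P.mapComp f g).symm ≪≫ α)
    obtain ⟨k₂, a₂, b₂, e₂⟩ := hf₁ Z k₁ h b₁.symm
    refine ⟨k₂, (α_ k₂ f g).symm ≪≫ whiskerRightIso a₂ g ≪≫ a₁, b₂, ?_⟩
    rw [Iso.eq_inv_comp] at e₁ e₂
    simp only [Iso.trans_hom, Iso.symm_hom, whiskerRightIso_hom, PrelaxFunctor.map₂_comp,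
      Pseudofunctor.map₂_whisker_right, ← e₁, ← e₂]
    simp [Pseudofunctor.map₂_associator_inv]
    rw [← whiskerRight_comp_assoc, whisker_exchange_assoc]
    simp
  · intro Z k l α β hyp
    have hcond : P.map₂ ((α_ k f g).hom ≫ α ≫ (α_ l f g).inv) =
        (P.mapComp (k ≫ f) g).hom ≫
          ((P.mapComp k f).hom ≫ β ▷ P.map f ≫ (P.mapComp l f).inv) ▷ P.map g ≫
          (P.mapComp (l ≫ f) g).inv := by
      simp only [PrelaxFunctor.map₂_comp, Pseudofunctor.map₂_associator,
        Pseudofunctor.map₂_associator_inv, hyp, assoc, Iso.inv_hom_id_assoc, comp_whiskerRight]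
      rw [whisker_exchange_assoc]
      simp
    obtain ⟨b₁, hb₁, hb₁w⟩ := hg₂ Z (k ≫ f) (l ≫ f)
      ((α_ k f g).hom ≫ α ≫ (α_ l f g).inv)
      ((P.mapComp k f).hom ≫ β ▷ P.map f ≫ (P.mapComp l f).inv) hcond
    obtain ⟨b₂, hb₂, hb₂w⟩ := hf₂ Z k l b₁ β hb₁
    refine ⟨b₂, hb₂, ?_⟩
    rw [Bicategory.whiskerRight_comp, hb₂w, hb₁w]; simp
  · intro Z k l α β hm hww
    apply hf₃ Z k l α β hm
    apply hg₃ Z (k ≫ f) (l ≫ f) (α ▷ f) (β ▷ f)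
    · simp only [Pseudofunctor.map₂_whisker_right, hm]
    · simpa using hww

theorem Is1Fibration.lift_induction (hP : Is1Fibration P) {C : E}
    {motive : ∀ ⦃D₀ : B⦄, (D₀ ⟶ P.obj C) → Prop}
    (lift : ∀ ⦃D : E⦄ (u : D ⟶ C), IsCartesian P u → motive (P.map u))
    ⦃D₀ : B⦄ (u : D₀ ⟶ P.obj C) : motive u := by
  obtain ⟨D, û, rfl, hû, hmap⟩ := hP C u
  rw [cast_eq] at hmap
  exact hmap ▸ lift û hû

/-- The class `C_W` of the paper. -/
abbrev cartesianOver (W : ∀ ⦃a b : B⦄, (a ⟶ b) → Prop) : ∀ ⦃a b : E⦄, (a ⟶ b) → Prop :=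
  fun _ _ f => IsCartesian P f ∧ W (P.map f)

variable {P} {W : ∀ ⦃a b : B⦄, (a ⟶ b) → Prop}

theorem Frc0.lift (hW : Frc0 B W) (hP : Is1Fibration P) : Frc0 E (cartesianOver P W) := by
  intro A B' C w f hw
  obtain ⟨D₀, u, h, hu, ⟨e⟩⟩ := hW (P.map w) (P.map f) hw.2
  induction u using hP.lift_induction with
  | lift u hcart =>
    obtain ⟨ĥ, ê, -⟩ := hw.1.1 _ (u ≫ f) h (e.symm ≪≫ (P.mapComp u f).symm)
    exact ⟨_, u, ĥ, ⟨hcart, hu⟩, ⟨ê.symm⟩⟩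

theorem Frc1.lift (hW : Frc1 B W) (hP : Is1Fibration P) : Frc1 E (cartesianOver P W) := by
  intro B' C D w f g hw α
  obtain ⟨A₀, u, hu, β, hβ⟩ := hW (P.map w) (P.map f) (P.map g) hw.2
    ((P.mapComp f w).inv ≫ P.map₂ α ≫ (P.mapComp g w).hom)
  induction u using hP.lift_induction with
  | lift u hcart =>
    have hcond : P.map₂ ((α_ u f w).hom ≫ u ◁ α ≫ (α_ u g w).inv) =
        (P.mapComp (u ≫ f) w).hom ≫
          ((P.mapComp u f).hom ≫ β ≫ (P.mapComp u g).inv) ▷ P.map w ≫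
          (P.mapComp (u ≫ g) w).inv := by
      rw [Iso.eq_inv_comp] at hβ
      simp [Pseudofunctor.map₂_associator_inv, ← hβ]
    obtain ⟨γ, -, hγ⟩ := hw.1.2.1 _ (u ≫ f) (u ≫ g) _ _ hcond
    refine ⟨_, u, ⟨hcart, hu⟩, γ, ?_⟩
    rw [hγ]
    simp

theorem Frc2.lift (hW : Frc2 B W) (hP : Is1Fibration P) : Frc2 E (cartesianOver P W) := by
  intro B' C D w f g hw α β hαβ
  have hPαβ : P.map₂ α ▷ P.map w = P.map₂ β ▷ P.map w := by
    simpa using congrArg P.map₂ hαβ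
  obtain ⟨A₀, u, hu, heq⟩ := hW (P.map w) (P.map f) (P.map g) hw.2 _ _ hPαβ
  induction u using hP.lift_induction with
  | lift u hcart =>
    refine ⟨_, u, ⟨hcart, hu⟩, hw.1.2.2 _ (u ≫ f) (u ≫ g) (u ◁ α) (u ◁ β) ?_ ?_⟩
    · simp [heq]
    · simp [hαβ]

end Cartesian

/-- Lifting Fractions Lemma: if `P : E ⥤ B` is a 1-fibration and `W` admits a right bicalculus of
fractions on `B`, then the class of `P`-Cartesian 1-cells lying over `W` admits a right
bicalculus of fractions on `E`. -/
theorem lifting_fractions {E : Type u₁} [Bicategory.{w₁, v₁} E]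
    {B : Type u₂} [Bicategory.{w₂, v₂} B]
    (P : Pseudofunctor E B) (hP : Is1Fibration P)
    (W : ∀ ⦃a b : B⦄, (a ⟶ b) → Prop) (hW : RightBicalculus B W) :
    RightBicalculus E (fun _ _ f => IsCartesian P f ∧ W (P.map f)) := by
  exact
    { equivalences := fun _ _ _ hf => ⟨hf.isCartesian P, hW.equivalences _ (hf.map P)⟩
      comp := fun _ _ _ f g hf hg =>
        ⟨hf.1.comp P hg.1, hW.iso_closed _ _ (hW.comp _ _ hf.2 hg.2) ⟨P.mapComp f g⟩⟩
      iso_closed := fun _ _ _ _ hw ⟨e⟩ => ⟨hw.1.of_iso P e, hW.iso_closed _ _ hw.2 ⟨P.map₂Iso e⟩⟩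
      frc0 := hW.frc0.lift hP
      frc1 := hW.frc1.lift hP
      frc2 := hW.frc2.lift hP }

end Paper
end
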